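/- Let d ≥ 1, d ≠ 2, ν ≥ 0, and let (F,G) solve F' = -F² - G - νF, G' = F - dFG with G(t) < 1/d. Set V(t) = ((d-2)F(t)² - 2G(t) + 1)/((d-2)(1 - dG(t))^{2/d}). Then V'(t) = -2νF(t)²/(1 - dG(t))^{2/d}. In particular V is nonincreasing when ν ≥ 0. -/

import Mathlib

/-!
With `w = (1 - dG)^{2/d}` the flow gives `w' = -2Fw`, and the numerator
`N = (d-2)F² - 2G + 1` satisfies `N' = -2FN - 2(d-2)νF²`. In the quotient rule for
`N / ((d-2)w)` the two `-2F` terms cancel, leaving only the friction term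
`-2νF² / w`, which is nonpositive.
-/

/-- The first integral `Φ(F, G)` of the frictionless flow. -/
noncomputable def firstIntegral (d f g : ℝ) : ℝ :=
  ((d - 2) * f ^ 2 - 2 * g + 1) / ((d - 2) * (1 - d * g) ^ (2 / d))

section FrictionalFlow

variable {d ν : ℝ} {F G : ℝ → ℝ} {t : ℝ}

theorem hasDerivAt_one_sub_mul_rpow (hd : d ≠ 0)
    (hG : HasDerivAt G (F t - d * F t * G t) t) (hpos : 0 < 1 - d * G t) :
    HasDerivAt (fun u => (1 - d * G u) ^ (2 / d)) (-2 * F t * (1 - d * G t) ^ (2 / d)) t := by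
  have hbase : HasDerivAt (fun u => 1 - d * G u) (-(d * (F t - d * F t * G t))) t := by
    simpa using (hG.const_mul d).const_sub 1
  refine (hbase.rpow_const (Or.inl hpos.ne')).congr_deriv ?_
  rw [Real.rpow_sub hpos, Real.rpow_one]
  field_simp

theorem hasDerivAt_firstIntegral_numerator
    (hF : HasDerivAt F (-(F t) ^ 2 - G t - ν * F t) t)
    (hG : HasDerivAt G (F t - d * F t * G t) t) :
    HasDerivAt (fun u => (d - 2) * F u ^ 2 - 2 * G u + 1)
      (-2 * F t * ((d - 2) * F t ^ 2 - 2 * G t + 1) - 2 * (d - 2) * ν * F t ^ 2) t := by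
  refine ((((hF.pow 2).const_mul (d - 2)).sub (hG.const_mul 2)).add_const 1).congr_deriv ?_
  push_cast
  ring

theorem hasDerivAt_firstIntegral (hd : d ≠ 0) (hd2 : d ≠ 2)
    (hF : HasDerivAt F (-(F t) ^ 2 - G t - ν * F t) t)
    (hG : HasDerivAt G (F t - d * F t * G t) t) (hpos : 0 < 1 - d * G t) :
    HasDerivAt (fun u => firstIntegral d (F u) (G u))
      (-2 * ν * F t ^ 2 / (1 - d * G t) ^ (2 / d)) t := by
  have hw : 0 < (1 - d * G t) ^ (2 / d) := Real.rpow_pos_of_pos hpos _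
  have hd2' : d - 2 ≠ 0 := sub_ne_zero.mpr hd2
  refine ((hasDerivAt_firstIntegral_numerator hF hG).div
    ((hasDerivAt_one_sub_mul_rpow hd hG hpos).const_mul (d - 2))
    (mul_ne_zero hd2' hw.ne')).congr_deriv ?_
  field_simp
  ring

end FrictionalFlow

/-- Along the frictional flow `F' = -F²-G-νF`, `G' = F-dFG` with `G < 1/d`, the
frictionless first integral `V(t) = ((d-2)F²-2G+1)/((d-2)(1-dG)^{2/d})`
satisfies `V' = -2νF²/(1-dG)^{2/d}`; in particular `V` is nonincreasing. -/
theorem stmt6 (d : ℕ) (hd : 1 ≤ d) (hd2 : d ≠ 2) (ν : ℝ) (hν : 0 ≤ ν)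
    (F G : ℝ → ℝ)
    (hF : ∀ t, HasDerivAt F (-(F t) ^ 2 - G t - ν * F t) t)
    (hG : ∀ t, HasDerivAt G (F t - (d : ℝ) * F t * G t) t)
    (hhalf : ∀ t, G t < 1 / d)
    (V : ℝ → ℝ)
    (hV : ∀ t, V t = (((d : ℝ) - 2) * (F t) ^ 2 - 2 * G t + 1)
          / (((d : ℝ) - 2) * (1 - (d : ℝ) * G t) ^ ((2 : ℝ) / d))) :
    (∀ t, HasDerivAt V
        (-2 * ν * (F t) ^ 2 / (1 - (d : ℝ) * G t) ^ ((2 : ℝ) / d)) t) ∧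
    (∀ s t : ℝ, s ≤ t → V t ≤ V s) := by
  have hdpos : (0 : ℝ) < d := by exact_mod_cast hd
  have hpos : ∀ t, 0 < 1 - (d : ℝ) * G t := fun t => by
    have := hhalf t
    rw [lt_div_iff₀ hdpos] at this
    linarith
  have hVΦ : V = fun t => firstIntegral d (F t) (G t) := funext hV
  have hV' : ∀ t, HasDerivAt V (-2 * ν * (F t) ^ 2 / (1 - (d : ℝ) * G t) ^ ((2 : ℝ) / d)) t :=
    fun t => hVΦ ▸ hasDerivAt_firstIntegral hdpos.ne' (by exact_mod_cast hd2)
      (hF t) (hG t) (hpos t)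
  refine ⟨hV', fun s t hst => antitone_of_deriv_nonpos (fun x => (hV' x).differentiableAt)
    (fun x => ?_) hst⟩
  rw [(hV' x).deriv]
  exact div_nonpos_of_nonpos_of_nonneg (by nlinarith [sq_nonneg (F x)])
    (Real.rpow_nonneg (hpos x).le _)
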